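/- arXiv:1902.06707 — 8 statements merged into one kernel-verified Lean document; each statement's English description precedes it below -/
import Mathlib

section
/- Let X be a topological space and κ an infinite cardinal. The following are equivalent: (i) for every subset A ⊆ X and every point x in the closure of A there exists a subset C ⊆ A with |C| ≤ κ such that x lies in the closure of C; (ii) for every topological space Y and every function f : X → Y, if for every subset C ⊆ X with |C| ≤ κ the restriction of f to C (with the subspace topology) is continuous, then f is continuous on X. -/
/-!
Condition (ii) says that `X` is coherent (`IsCoherentWith`) with its `κ`-small subsets.
If every point of `closure A` lies in the closure of a `κ`-small subset of `A`, then a map that is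
continuous on every `κ`-small set is continuous, because `x ∈ closure C` and continuity on
`insert x C` give `f x ∈ closure (f '' C)`. Conversely, if `X` is coherent with its `κ`-small
subsets, the set of points lying in the closure of some `κ`-small subset of `A` is closed: on a
`κ`-small set `C₀` it agrees with the closure of a single `κ`-small subset of `A`, the union of
witnesses for the points of `C₀`, which is small since `κ * κ = κ`. This closed set contains `A`,
hence `closure A`.
-/

universe u v w

open Cardinal Set Topology

theorem Cardinal.mk_iUnion_le_of_le {α ι : Type u} {κ : Cardinal.{u}} (hκ : ℵ₀ ≤ κ)
    {f : ι → Set α} (hι : #ι ≤ κ) (hf : ∀ i, #(f i) ≤ κ) : #(⋃ i, f i) ≤ κ :=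
  calc #(⋃ i, f i) ≤ #ι * ⨆ i, #(f i) := mk_iUnion_le f
    _ ≤ κ * κ := mul_le_mul' hι (ciSup_le' hf)
    _ = κ := mul_eq_self hκ

theorem Cardinal.mk_insert_le_of_le {α : Type u} {κ : Cardinal.{u}} (hκ : ℵ₀ ≤ κ) {s : Set α}
    (hs : #s ≤ κ) (a : α) : #(insert a s : Set α) ≤ κ :=
  calc #(insert a s : Set α) ≤ #s + 1 := mk_insert_le
    _ ≤ κ + 1 := add_le_add_left hs 1
    _ = κ := add_one_eq hκ

section

variable {X : Type u} [TopologicalSpace X] {κ : Cardinal.{u}}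

/-- The `κ`-closure `[A]_κ` of set-theoretic topology. -/
def smallClosure (κ : Cardinal.{u}) (A : Set X) : Set X :=
  {x | ∃ C ⊆ A, #C ≤ κ ∧ x ∈ closure C}

theorem subset_smallClosure (hκ : κ ≠ 0) (A : Set X) : A ⊆ smallClosure κ A := fun a ha =>
  ⟨{a}, singleton_subset_iff.2 ha, (mk_singleton a).le.trans (Cardinal.one_le_iff_ne_zero.2 hκ),
    subset_closure rfl⟩

theorem closure_subset_smallClosure_of_subset {A E : Set X} (hEA : E ⊆ A) (hE : #E ≤ κ) :
    closure E ⊆ smallClosure κ A := fun _ hx => ⟨E, hEA, hE, hx⟩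

theorem exists_small_subset_closure_of_subset_smallClosure (hκ : ℵ₀ ≤ κ) {A S : Set X}
    (hS : S ⊆ smallClosure κ A) (hSκ : #S ≤ κ) :
    ∃ E ⊆ A, #E ≤ κ ∧ S ⊆ closure E := by
  choose C hCA hCκ hxC using fun s : S => hS s.2
  refine ⟨⋃ s, C s, iUnion_subset hCA, mk_iUnion_le_of_le hκ hSκ hCκ, fun x hx => ?_⟩
  exact closure_mono (subset_iUnion C ⟨x, hx⟩) (hxC ⟨x, hx⟩)

theorem isClosed_smallClosure (hκ : ℵ₀ ≤ κ) (hX : IsCoherentWith {C : Set X | #C ≤ κ})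
    (A : Set X) : IsClosed (smallClosure κ A) := by
  refine hX.isClosed_iff.2 fun C₀ (hC₀ : #C₀ ≤ κ) => ?_
  obtain ⟨E, hEA, hEκ, hE⟩ := exists_small_subset_closure_of_subset_smallClosure hκ
    (inter_subset_left (s := smallClosure κ A) (t := C₀))
    ((mk_le_mk_of_subset inter_subset_right).trans hC₀)
  have htrace : ((↑) ⁻¹' smallClosure κ A : Set C₀) = (↑) ⁻¹' closure E :=
    Subset.antisymm (fun c hc => hE ⟨hc, c.2⟩)
      (preimage_mono (closure_subset_smallClosure_of_subset hEA hEκ))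
  rw [htrace]
  exact isClosed_closure.preimage continuous_subtype_val

theorem continuous_of_closure_subset_smallClosure {Y : Type v} [TopologicalSpace Y] {f : X → Y}
    (hκ : ℵ₀ ≤ κ) (hX : ∀ A : Set X, closure A ⊆ smallClosure κ A)
    (hf : ∀ C : Set X, #C ≤ κ → ContinuousOn f C) : Continuous f := by
  refine continuous_iff_image_closure_subset_closure_image.2 fun A => ?_
  rintro _ ⟨x, hx, rfl⟩
  obtain ⟨C, hCA, hCκ, hxC⟩ := hX A hx
  have hfx : f x ∈ closure (f '' C) :=
    ((hf _ (mk_insert_le_of_le hκ hCκ x)).continuousWithinAt (mem_insert x C)).mono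
      (subset_insert x C) |>.mem_closure_image hxC
  exact closure_mono (image_mono hCA) hfx

theorem isCoherentWith_iff_closure_subset_smallClosure (hκ : ℵ₀ ≤ κ) :
    IsCoherentWith {C : Set X | #C ≤ κ} ↔ ∀ A : Set X, closure A ⊆ smallClosure κ A :=
  ⟨fun hX A => closure_minimal (subset_smallClosure (aleph0_pos.trans_le hκ).ne' A)
      (isClosed_smallClosure hκ hX A),
    fun hX => .of_continuous_prop fun _ hf => continuous_of_closure_subset_smallClosure hκ hX hf⟩

end

theorem Topology.IsCoherentWith.of_continuous_ulift {X : Type u} [TopologicalSpace X]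
    {S : Set (Set X)}
    (h : ∀ (Y : Type max u w) [TopologicalSpace Y] (f : X → Y),
      (∀ s ∈ S, ContinuousOn f s) → Continuous f) :
    IsCoherentWith S :=
  .of_continuous_prop fun f hf => continuous_uliftDown.comp <|
    h (ULift.{max u w} Prop) (ULift.up ∘ f) fun s hs =>
      continuous_uliftUp.comp_continuousOn (hf s hs)

/-- Let `X` be a topological space and `κ` an infinite cardinal. The following
are equivalent: (i) for every `A ⊆ X` and every `x ∈ closure A` there is `C ⊆ A` with `#C ≤ κ`
and `x ∈ closure C` (i.e. the tightness of `X` is at most `κ`); (ii) for every topological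
space `Y` and every `f : X → Y`, if the restriction of `f` to every subset of cardinality at
most `κ` (with the subspace topology) is continuous, then `f` is continuous. -/
theorem tightness_le_iff_colimit {X : Type u} [TopologicalSpace X]
    (κ : Cardinal.{u}) (hκ : Cardinal.aleph0 ≤ κ) :
    (∀ (A : Set X) (x : X), x ∈ closure A →
        ∃ C : Set X, C ⊆ A ∧ Cardinal.mk C ≤ κ ∧ x ∈ closure C) ↔
      (∀ (Y : Type max u v) [TopologicalSpace Y] (f : X → Y),
        (∀ C : Set X, Cardinal.mk C ≤ κ → Continuous fun c : C => f c) → Continuous f) := by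
  constructor
  · intro ht Y _ f hf
    exact continuous_of_closure_subset_smallClosure hκ ht fun C hC =>
      continuousOn_iff_continuous_domRestrict.2 (hf C hC)
  · intro h A x hx
    refine (isCoherentWith_iff_closure_subset_smallClosure hκ).1
      (.of_continuous_ulift.{u, v} fun Y _ f hf => ?_) A hx
    exact h Y f fun C hC => continuousOn_iff_continuous_domRestrict.1 (hf C hC)
end

section
/- Let κ be an infinite cardinal, (ι, ≤) a κ-long directed preorder, X a set, s : ι → Set X a monotone family with ⋃_α s(α) = X, and for each α a topology t_α on s(α) such that for α ≤ β the inclusion (s(α), t_α) → (s(β), t_β) is a topological embedding. Let T be the colimit space topology on X, and let S be an admissible topology on X. Then the following are equivalent: (i) the tightness of (X, S) is at most κ; (ii) S = T and the tightness of each (s(α), t_α) is at most κ. -/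
/-!
Once `S` is admissible, `t α` is just the subspace topology of `s α`, and `S` equals the colimit
topology exactly when `S` is coherent with the cover `{s α}`.  Tightness at most `κ` passes to
subspaces.  If `S` has tightness at most `κ`, a point in the closure of `F` lies in the closure of
a `κ`-small `C ⊆ F`; since the preorder is `κ`-long, `C` together with the point fits into a single
`s α`, so relative closedness of `F` in every `s α` forces closedness of `F`: this is coherence.
Conversely, under coherence the set of points reached by closures of `κ`-small subsets of `A` is
relatively closed in every `s α` (a `κ`-union of `κ`-small sets is `κ`-small), hence closed.
-/

universe u

open TopologicalSpace

/-- The tightness of `X` (with the topology `t`) is at most `κ`. -/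
def TightnessLE {X : Type u} (t : TopologicalSpace X) (κ : Cardinal.{u}) : Prop :=
  ∀ (A : Set X) (x : X), x ∈ @closure X t A →
    ∃ C : Set X, C ⊆ A ∧ Cardinal.mk C ≤ κ ∧ x ∈ @closure X t C

open Set Topology Cardinal

theorem TightnessLE.of_isEmbedding {X Y : Type u} [TopologicalSpace X] [TopologicalSpace Y]
    {κ : Cardinal.{u}} {f : Y → X} (h : TightnessLE ‹TopologicalSpace X› κ)
    (hf : IsEmbedding f) : TightnessLE ‹TopologicalSpace Y› κ := by
  intro A y hy
  rw [hf.closure_eq_preimage_closure_image] at hy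
  obtain ⟨C, hCA, hCκ, hyC⟩ := h _ _ hy
  have hC : f '' (f ⁻¹' C) = C := image_preimage_eq_of_subset (hCA.trans (image_subset_range f A))
  refine ⟨f ⁻¹' C, ?_, (mk_preimage_of_injective f C hf.injective).trans hCκ, ?_⟩
  · rw [← hf.injective.preimage_image A]
    exact preimage_mono hCA
  · rwa [hf.closure_eq_preimage_closure_image, hC]

theorem Monotone.exists_subset_of_mk_le {ι X : Type u} [Preorder ι] {κ : Cardinal.{u}}
    {s : ι → Set X} (hs : Monotone s) (hlong : ∀ C : Set ι, #C ≤ κ → ∃ ub, ∀ i ∈ C, i ≤ ub)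
    (hsU : ⋃ α, s α = Set.univ) {C : Set X} (hC : #C ≤ κ) : ∃ α, C ⊆ s α := by
  choose g hg using fun c : C => mem_iUnion.mp (hsU ▸ mem_univ (c : X))
  obtain ⟨α, hα⟩ := hlong (range g) (mk_range_le.trans hC)
  exact ⟨α, fun c hc => hs (hα _ ⟨⟨c, hc⟩, rfl⟩) (hg ⟨c, hc⟩)⟩

namespace Topology.IsCoherentWith

variable {X : Type u} [TopologicalSpace X] {κ : Cardinal.{u}}

theorem of_tightnessLE {S : Set (Set X)} (hκ : ℵ₀ ≤ κ) (htight : TightnessLE ‹_› κ)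
    (hS : ∀ C : Set X, #C ≤ κ → ∃ s ∈ S, C ⊆ s) : IsCoherentWith S := by
  refine .of_isClosed fun F hF => closure_subset_iff_isClosed.1 fun x hx => ?_
  obtain ⟨C, hCF, hCκ, hxC⟩ := htight F x hx
  obtain ⟨s, hs, hxCs⟩ := hS (insert x C) (mk_insert_le.trans <| by
    rw [← add_one_eq hκ]; exact add_le_add_left hCκ 1)
  have hx' : (⟨x, hxCs (mem_insert x C)⟩ : s) ∈ closure ((↑) ⁻¹' C) := by
    rwa [closure_subtype, Subtype.image_preimage_coe,
      inter_eq_right.2 ((subset_insert x C).trans hxCs)]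
  exact (hF s hs).closure_subset_iff.2 (preimage_mono hCF) hx'

theorem tightnessLE {S : Set (Set X)} (hS : IsCoherentWith S) (hκ : ℵ₀ ≤ κ)
    (htight : ∀ s ∈ S, TightnessLE (‹TopologicalSpace X›.induced ((↑) : s → X)) κ) :
    TightnessLE ‹_› κ := by
  intro A x hx
  set D : Set X := {y | ∃ C ⊆ A, #C ≤ κ ∧ y ∈ closure C}
  have hAD : A ⊆ D := fun y hy =>
    ⟨{y}, singleton_subset_iff.2 hy, by simpa using one_le_aleph0.trans hκ, subset_closure rfl⟩
  suffices IsClosed D from closure_minimal hAD this hx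
  refine hS.isClosed_iff.2 fun s hs => closure_subset_iff_isClosed.1 fun y hy => ?_
  obtain ⟨E, hED, hEκ, hyE⟩ := htight s hs _ y hy
  choose f hfA hfκ hf using fun e : E => hED e.2
  refine ⟨⋃ e, f e, iUnion_subset hfA, ?_, ?_⟩
  · calc #(⋃ e, f e) ≤ #E * ⨆ e, #(f e) := mk_iUnion_le f
      _ ≤ κ * κ := mul_le_mul' hEκ (ciSup_le' hfκ)
      _ = κ := mul_eq_self hκ
  · have hEf : (↑) '' E ⊆ closure (⋃ e, f e) := by
      rintro _ ⟨e, he, rfl⟩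
      exact closure_mono (subset_iUnion f ⟨e, he⟩) (hf ⟨e, he⟩)
    exact closure_minimal hEf isClosed_closure (closure_subtype.1 hyE)

theorem range_iff_eq_iSup_coinduced {ι : Type*} {s : ι → Set X} :
    IsCoherentWith (range s) ↔
      ‹TopologicalSpace X› = ⨆ α, coinduced ((↑) : s α → X) (‹TopologicalSpace X›.induced (↑)) := by
  constructor
  · refine fun h => le_antisymm (TopologicalSpace.le_def.2 fun u hu => ?_)
      (iSup_le fun α => continuous_iff_coinduced_le.1 continuous_subtype_val)
    refine h.isOpen_iff.2 ?_
    rintro _ ⟨α, rfl⟩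
    exact isOpen_coinduced.1 (isOpen_iSup_iff.1 hu α)
  · refine fun h => ⟨fun u hu => ?_⟩
    rw [h]
    exact isOpen_iSup_iff.2 fun α => isOpen_coinduced.2 (hu _ ⟨α, rfl⟩)

end Topology.IsCoherentWith

theorem admissible_topology_eq_colimit_iff_tight_general
    {ι : Type u} [Preorder ι] {X : Type u}
    (κ : Cardinal.{u}) (hκ : Cardinal.aleph0 ≤ κ)
    (hlong : ∀ C : Set ι, Cardinal.mk C ≤ κ → ∃ ub, ∀ i ∈ C, i ≤ ub)
    (s : ι → Set X) (hs : Monotone s) (hsU : ⋃ α, s α = Set.univ)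
    (t : ∀ α, TopologicalSpace (s α))
    (S : TopologicalSpace X)
    (hadm : ∀ α, @Topology.IsEmbedding _ _ (t α) S (Subtype.val : s α → X)) :
    TightnessLE S κ ↔
      (S = ⨆ α, TopologicalSpace.coinduced (Subtype.val : s α → X) (t α)) ∧
        ∀ α, TightnessLE (t α) κ := by
  obtain rfl : t = fun α => S.induced Subtype.val := funext fun α => (hadm α).eq_induced
  beta_reduce
  let _ := S
  rw [← IsCoherentWith.range_iff_eq_iSup_coinduced]
  refine ⟨fun h => ⟨.of_tightnessLE hκ h fun C hC => ?_, fun α => h.of_isEmbedding .subtypeVal⟩,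
    fun ⟨hcoh, htight⟩ => hcoh.tightnessLE hκ ?_⟩
  · obtain ⟨α, hα⟩ := hs.exists_subset_of_mk_le hlong hsU hC
    exact ⟨s α, mem_range_self α, hα⟩
  · rintro _ ⟨α, rfl⟩
    exact htight α

/-- Let `κ` be an infinite cardinal, `(ι, ≤)` a `κ`-long directed preorder,
`X` a set, `s : ι → Set X` a monotone family with union `X`, and for each `α` a topology `t α`
on `s α` such that for `α ≤ β` the inclusion `(s α, t α) → (s β, t β)` is an embedding.
Let `T` be the colimit space topology on `X` (the finest topology making all inclusions
continuous, i.e. the supremum of the coinduced topologies), and `S` an admissible topology on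
`X` (one for which each inclusion `(s α, t α) → (X, S)` is an embedding).  Then the tightness
of `(X, S)` is at most `κ` iff `S = T` and each `(s α, t α)` has tightness at most `κ`. -/
theorem admissible_topology_eq_colimit_iff_tight
    {ι : Type u} [Preorder ι] [IsDirected ι (· ≤ ·)] {X : Type u}
    (κ : Cardinal.{u}) (hκ : Cardinal.aleph0 ≤ κ)
    (hlong : ∀ C : Set ι, Cardinal.mk C ≤ κ → ∃ ub, ∀ i ∈ C, i ≤ ub)
    (s : ι → Set X) (hs : Monotone s) (hsU : ⋃ α, s α = Set.univ)
    (t : ∀ α, TopologicalSpace (s α))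
    (hemb : ∀ α β (h : α ≤ β),
      @Topology.IsEmbedding _ _ (t α) (t β) (Set.inclusion (hs h)))
    (S : TopologicalSpace X)
    (hadm : ∀ α, @Topology.IsEmbedding _ _ (t α) S (Subtype.val : s α → X)) :
    TightnessLE S κ ↔
      (S = ⨆ α, TopologicalSpace.coinduced (Subtype.val : s α → X) (t α)) ∧
        ∀ α, TightnessLE (t α) κ :=
  admissible_topology_eq_colimit_iff_tight_general κ hκ hlong s hs hsU t S hadm
end

section
/- Let {G_j}_{j ∈ J} be a family of metrizable topological groups. For each countable subset D ⊆ J let G_D = ∏_{j ∈ D} G_j × ∏_{j ∉ D} {e_j}, regarded as a subgroup of ∏_{j ∈ J} G_j with the product topology. Then the colimit space topology on the union ⋃_{D ∈ [J]^{≤ω}} G_D (the finest topology making each inclusion G_D → ⋃ G_D continuous) coincides with the subspace topology inherited from the product ∏_{j ∈ J} G_j; consequently this colimit space topology is a group topology, and the colimit of the family {G_D} in topological spaces is the Σ-product Σ_{j ∈ J} (G_j, e_j), the subgroup of ∏ G_j consisting of elements with countable support. -/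
open TopologicalSpace

variable {J : Type*} (G : J → Type*) [∀ j, Group (G j)] [∀ j, TopologicalSpace (G j)]

def sigmaProdSubgroup : Subgroup (∀ j, G j) where
  carrier := {x | {j | x j ≠ 1}.Countable}
  one_mem' := by
    show ({j | (1 : ∀ j, G j) j ≠ 1}).Countable
    have : {j | (1 : ∀ j, G j) j ≠ 1} = ∅ := by ext j; simp
    rw [this]
    exact Set.countable_empty
  mul_mem' := by
    intro a b ha hb
    refine Set.Countable.mono ?_ (ha.union hb)
    intro j hj
    by_contra hc
    simp only [Set.mem_union, Set.mem_setOf_eq, not_or, not_not] at hc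
    exact hj (by simp [Pi.mul_apply, hc.1, hc.2])
  inv_mem' := by
    intro a ha
    refine Set.Countable.mono ?_ ha
    intro j hj
    simp only [Set.mem_setOf_eq, Pi.inv_apply, ne_eq, inv_eq_one] at hj ⊢
    exact hj

/-- For a countable `D ⊆ J`, `G_D = ∏_{j ∈ D} G j × ∏_{j ∉ D} {1}` as a subset of the
product. -/
def sigmaPiece (D : Set J) : Set (∀ j, G j) := {x | ∀ j ∉ D, x j = 1}

theorem sigmaPiece_subset (D : Set J) (hD : D.Countable) :
    sigmaPiece G D ⊆ (sigmaProdSubgroup G : Set (∀ j, G j)) := fun x hx =>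
  Set.Countable.mono (fun j hj => by by_contra hc; exact hj (hx j hc)) hD

/-!
The subspace topology on the Σ-product is coarser than the colimit topology because every
inclusion `G_D → Σ` is continuous. Conversely, let `U` be open in the colimit topology and
suppose `U` is not a neighbourhood of `x` in `Σ`. First countability of the factors gives, for
every finite `F ⊆ J` and `n`, a point of `Σ \ U` in the `n`-th basic box around `x` over `F`.
A countable `D ⊇ supp x` that contains the supports of the points chosen for all finite subsets
of `D` puts these points into `G_D`, where every neighbourhood of `x` contains one of them; so
`U ∩ G_D` is not open in `G_D`.
-/

open Topology Filter

theorem Set.Countable.exists_superset_forall_finset_subset {α : Type*} {c : Finset α → Set α}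
    (hc : ∀ F, (c F).Countable) {D₀ : Set α} (hD₀ : D₀.Countable) :
    ∃ D : Set α, D.Countable ∧ D₀ ⊆ D ∧ ∀ F : Finset α, ↑F ⊆ D → c F ⊆ D := by
  let step : Set α → Set α := fun D => D ∪ ⋃ (F : Finset α) (_ : ↑F ⊆ D), c F
  let Ds : ℕ → Set α := fun n => step^[n] D₀
  have hDs_succ : ∀ n, Ds (n + 1) = step (Ds n) := fun n => Function.iterate_succ_apply' _ _ _
  have hcount : ∀ n, (Ds n).Countable := by
    intro n
    induction n with
    | zero => exact hD₀
    | succ n ih =>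
      have hfin : {F : Finset α | ↑F ⊆ Ds n}.Countable :=
        ((countable_ofPred_finite_subset ih).preimage Finset.coe_injective).mono
          fun F hF => show _ ∧ _ from ⟨F.finite_toSet, hF⟩
      rw [hDs_succ]
      exact ih.union (hfin.biUnion fun F _ => hc F)
  have hmono : Monotone Ds :=
    monotone_nat_of_le_succ fun n => (hDs_succ n).symm ▸ subset_union_left
  refine ⟨⋃ n, Ds n, countable_iUnion hcount, subset_iUnion Ds 0, fun F hF => ?_⟩
  obtain ⟨n, hn⟩ := hmono.directed_le.exists_mem_subset_of_finset_subset_biUnion hF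
  calc c F ⊆ Ds (n + 1) :=
        hDs_succ n ▸ subset_union_of_subset_right (subset_biUnion_of_mem hn) _
    _ ⊆ ⋃ n, Ds n := subset_iUnion Ds _

omit [∀ j, TopologicalSpace (G j)] in
theorem mem_sigmaPiece_iff {D : Set J} {x : ∀ j, G j} :
    x ∈ sigmaPiece G D ↔ {j | x j ≠ 1} ⊆ D :=
  forall_congr' fun _ => not_imp_comm

omit [∀ j, TopologicalSpace (G j)] in
theorem iUnion_sigmaPiece :
    (⋃ (D : Set J) (_ : D.Countable), sigmaPiece G D) =
      (sigmaProdSubgroup G : Set (∀ j, G j)) :=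
  Set.Subset.antisymm
    (Set.iUnion₂_subset fun _ hD _ hx => hD.mono ((mem_sigmaPiece_iff G).1 hx))
    fun _ hx => Set.mem_iUnion₂_of_mem hx ((mem_sigmaPiece_iff G).2 subset_rfl)

theorem exists_finset_forall_mem_of_mem_nhds_sigmaPiece {D : Set J} {x : sigmaPiece G D}
    {B : ∀ j, ℕ → Set (G j)} (hB : ∀ j, (𝓝 ((x : ∀ j, G j) j)).HasAntitoneBasis (B j))
    {W : Set (sigmaPiece G D)} (hW : W ∈ 𝓝 x) :
    ∃ F : Finset J, ↑F ⊆ D ∧ ∃ n, ∀ y : sigmaPiece G D,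
      (∀ j ∈ F, (y : ∀ j, G j) j ∈ B j n) → y ∈ W := by
  classical
  obtain ⟨V, hV, hVW⟩ := mem_comap.1 (nhds_subtype _ x ▸ hW)
  rw [nhds_pi, mem_pi'] at hV
  obtain ⟨I, t, ht, hIt⟩ := hV
  choose N hN using fun j => (hB j).mem_iff.1 (ht j)
  refine ⟨I.filter (· ∈ D), fun j hj => (Finset.mem_filter.1 hj).2, I.sup N,
    fun y hy => hVW (hIt fun j hj => ?_)⟩
  by_cases hjD : j ∈ D
  · exact hN j ((hB j).antitone (Finset.le_sup hj) (hy j (Finset.mem_filter.2 ⟨hj, hjD⟩)))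
  · rw [y.2 j hjD, ← x.2 j hjD]
    exact mem_of_mem_nhds (ht j)

theorem iSup_coinduced_sigmaPiece_le :
    (⨆ (D : Set J) (hD : D.Countable),
      TopologicalSpace.coinduced (Set.inclusion (sigmaPiece_subset G D hD))
        (inferInstance : TopologicalSpace (sigmaPiece G D)))
      ≤ (inferInstance : TopologicalSpace (sigmaProdSubgroup G)) :=
  iSup₂_le fun D hD => (continuous_inclusion (sigmaPiece_subset G D hD)).coinduced_le

theorem le_iSup_coinduced_sigmaPiece [∀ j, FirstCountableTopology (G j)] :
    (inferInstance : TopologicalSpace (sigmaProdSubgroup G))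
      ≤ ⨆ (D : Set J) (hD : D.Countable),
        TopologicalSpace.coinduced (Set.inclusion (sigmaPiece_subset G D hD))
          (inferInstance : TopologicalSpace (sigmaPiece G D)) := by
  intro U hU
  simp only [isOpen_iSup_iff, isOpen_coinduced] at hU
  refine isOpen_iff_mem_nhds.2 fun x hx => by_contra fun hxU => ?_
  choose B hB using fun j => (𝓝 ((x : ∀ j, G j) j)).exists_antitone_basis
  have hpick : ∀ (F : Finset J) (n : ℕ), ∃ y : sigmaProdSubgroup G,
      (∀ j ∈ F, (y : ∀ j, G j) j ∈ B j n) ∧ y ∉ U := by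
    intro F n
    have hV : (Set.pi ↑F fun j => B j n) ∈ 𝓝 (x : ∀ j, G j) :=
      set_pi_mem_nhds F.finite_toSet fun j _ => (hB j).mem n
    exact Set.not_subset.1 fun h =>
      hxU (nhds_subtype _ x ▸ mem_of_superset (preimage_mem_comap hV) h)
  choose s hsB hsU using hpick
  obtain ⟨D, hD, hxD, hsD⟩ := Set.Countable.exists_superset_forall_finset_subset
    (c := fun F => ⋃ n, {j | (s F n : ∀ j, G j) j ≠ 1})
    (fun F => Set.countable_iUnion fun n => (s F n).2) x.2
  let x' : sigmaPiece G D := ⟨x, (mem_sigmaPiece_iff G).2 hxD⟩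
  obtain ⟨F, hFD, n, hFn⟩ := exists_finset_forall_mem_of_mem_nhds_sigmaPiece G (x := x') hB
    ((hU D hD).mem_nhds (x := x') hx)
  have hsn : (s F n : ∀ j, G j) ∈ sigmaPiece G D :=
    (mem_sigmaPiece_iff G).2 ((Set.subset_iUnion _ n).trans (hsD F hFD))
  exact hsU F n (hFn ⟨_, hsn⟩ (hsB F n))

/-- Let `{G j}` be a family of metrizable topological groups, and for each
countable `D ⊆ J` let `G_D = ∏_{j ∈ D} G j × ∏_{j ∉ D} {1}` carry the product (= subspace)
topology. Then the union of the `G_D` is the Σ-product of the `G j`, and the colimit space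
topology on it (the finest topology making each inclusion `G_D → ⋃ G_D` continuous, i.e. the
supremum of the coinduced topologies) coincides with the subspace topology inherited from
`∀ j, G j`; consequently it is a group topology. -/
theorem colimit_sigmaProd [∀ j, IsTopologicalGroup (G j)] [∀ j, MetrizableSpace (G j)] :
    (⋃ (D : Set J) (_ : D.Countable), sigmaPiece G D)
        = (sigmaProdSubgroup G : Set (∀ j, G j)) ∧
      (⨆ (D : Set J) (hD : D.Countable),
          TopologicalSpace.coinduced (Set.inclusion (sigmaPiece_subset G D hD))
            (inferInstance : TopologicalSpace (sigmaPiece G D)))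
        = (inferInstance : TopologicalSpace (sigmaProdSubgroup G)) ∧
      @IsTopologicalGroup (sigmaProdSubgroup G)
        (⨆ (D : Set J) (hD : D.Countable),
          TopologicalSpace.coinduced (Set.inclusion (sigmaPiece_subset G D hD))
            (inferInstance : TopologicalSpace (sigmaPiece G D))) _ := by
  have htop := (iSup_coinduced_sigmaPiece_le G).antisymm (le_iSup_coinduced_sigmaPiece G)
  exact ⟨iUnion_sigmaPiece G, htop, htop ▸ inferInstance⟩
end

section
/- Let (ι, ≤) be a directed preorder in which every countable subset has an upper bound, and let f : ι → ℝ be a monotone function (order preserving or order reversing). Then f is eventually constant: there exist β ∈ ι and s ∈ ℝ such that f(γ) = s for every γ ≥ β. -/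
open TopologicalSpace

/-
Pick a countable dense set `D` of values and, for every `d ∈ D` exceeded by some value of `f`,
one index where this happens. An upper bound `u` of these countably many indices has `f u ≥ d`
for all such `d`, so no value of `f` can exceed `f u`: a value `f γ > f u` would have an element
of `D` strictly between them. Hence `f` is constant, equal to `f u`, above `u`.
-/

section

variable {ι α : Type*} [Preorder ι] [LinearOrder α] [TopologicalSpace α] [OrderClosedTopology α]
  [DenselyOrdered α] [SeparableSpace α]

theorem Monotone.exists_forall_le_of_countable_bddAbove
    (hι : ∀ C : Set ι, C.Countable → BddAbove C) {f : ι → α} (hf : Monotone f) :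
    ∃ u, ∀ i, f i ≤ f u := by
  obtain ⟨D, hD_countable, hD_dense⟩ := exists_countable_dense α
  let S : Set α := {d ∈ D | ∃ i, d < f i}
  have : Countable S := (hD_countable.mono (Set.sep_subset _ _)).to_subtype
  choose g hg using fun d : S ↦ d.2.2
  obtain ⟨u, hu⟩ := hι (Set.range g) (Set.countable_range g)
  refine ⟨u, fun γ ↦ le_of_not_gt fun hlt ↦ ?_⟩
  obtain ⟨d, hdD, hud, hdγ⟩ := hD_dense.exists_between hlt
  have hdu : d < f u := (hg ⟨d, hdD, γ, hdγ⟩).trans_le (hf (hu ⟨_, rfl⟩))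
  exact lt_asymm hud hdu

end

theorem eventually_constant_of_long_directed_monotone_general
    {ι : Type*} [Preorder ι]
    (hlong : ∀ C : Set ι, C.Countable → ∃ ub, ∀ i ∈ C, i ≤ ub)
    (f : ι → ℝ) (hf : Monotone f ∨ Antitone f) :
    ∃ (β : ι) (s : ℝ), ∀ γ, β ≤ γ → f γ = s := by
  rcases hf with hf | hf
  · obtain ⟨u, hu⟩ := hf.exists_forall_le_of_countable_bddAbove hlong
    exact ⟨u, f u, fun γ hγ ↦ (hu γ).antisymm (hf hγ)⟩
  · obtain ⟨u, hu⟩ := hf.dual_right.exists_forall_le_of_countable_bddAbove hlong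
    exact ⟨u, f u, fun γ hγ ↦ (hf hγ).antisymm (hu γ)⟩

/-- Let `(ι, ≤)` be a directed preorder in which every countable subset has
an upper bound (a long directed preorder), and let `f : ι → ℝ` be monotone (order preserving
or order reversing). Then `f` is eventually constant. -/
theorem eventually_constant_of_long_directed_monotone
    {ι : Type*} [Preorder ι] [IsDirected ι (· ≤ ·)]
    (hlong : ∀ C : Set ι, C.Countable → ∃ ub, ∀ i ∈ C, i ≤ ub)
    (f : ι → ℝ) (hf : Monotone f ∨ Antitone f) :
    ∃ (β : ι) (s : ℝ), ∀ γ, β ≤ γ → f γ = s :=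
  eventually_constant_of_long_directed_monotone_general hlong f hf
end

section
/- Let 𝕂 be ℝ or ℂ, let (ι, ≤) be a long directed preorder, let E be a normed vector space over 𝕂, and let {E_α}_{α ∈ ι} be a monotone family of linear subspaces with union E such that each E_α is complete with respect to the restriction of the norm of E (so the inclusions E_α → E_β are isometric embeddings). Then E is a Banach space, and the norm topology on E coincides with the colimit space topology, i.e. the finest topology on E making each inclusion E_α → E continuous. -/
open TopologicalSpace Filter Topology

/-! A Cauchy sequence and a convergent sequence together with its limit are countable sets, so
by longness each lies in a single `E_α`. Completeness of `E_α` then yields limits of Cauchy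
sequences, and a subset of `E` whose trace on every `E_α` is closed is sequentially closed,
hence closed since normed spaces are sequential. -/

theorem Set.Countable.exists_subset_of_monotone {X ι : Type*} [Preorder ι]
    (hlong : ∀ C : Set ι, C.Countable → BddAbove C) {s : ι → Set X} (hs : Monotone s)
    (hcover : ∀ x, ∃ α, x ∈ s α) {C : Set X} (hC : C.Countable) : ∃ β, C ⊆ s β := by
  choose α hα using hcover
  obtain ⟨β, hβ⟩ := hlong (α '' C) (hC.image α)
  exact ⟨β, fun x hx => hs (hβ (Set.mem_image_of_mem α hx)) (hα x)⟩

theorem completeSpace_of_countable_subset_isComplete {X : Type*} [UniformSpace X]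
    [(uniformity X).IsCountablyGenerated]
    (h : ∀ C : Set X, C.Countable → ∃ K, IsComplete K ∧ C ⊆ K) : CompleteSpace X := by
  refine UniformSpace.complete_of_cauchySeq_tendsto fun u hu => ?_
  obtain ⟨K, hK, huK⟩ := h (Set.range u) (Set.countable_range u)
  obtain ⟨x, -, hx⟩ := hK _ hu (le_principal_iff.2 <| mem_map.2 <|
    Eventually.of_forall fun n => huK (Set.mem_range_self n))
  exact ⟨x, hx⟩

theorem iSup_coinduced_subtype_val_eq_of_countable_subset {X ι : Type*} [TopologicalSpace X]
    [SequentialSpace X] (t : ι → Set X) (h : ∀ C : Set X, C.Countable → ∃ α, C ⊆ t α) :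
    ⨆ α, coinduced (Subtype.val : t α → X) inferInstance = ‹TopologicalSpace X› := by
  refine le_antisymm (iSup_le fun α => continuous_subtype_val.coinduced_le) fun U hU => ?_
  simp only [isOpen_iSup_iff, isOpen_coinduced] at hU
  rw [← isClosed_compl_iff]
  refine IsSeqClosed.isClosed fun u x huU hux => ?_
  obtain ⟨β, hβ⟩ := h (insert x (Set.range u)) ((Set.countable_range u).insert x)
  have hux' : Tendsto (fun n => (⟨u n, hβ (Set.mem_insert_of_mem _ ⟨n, rfl⟩)⟩ : t β)) atTop
      (𝓝 ⟨x, hβ (Set.mem_insert x _)⟩) := tendsto_subtype_rng.2 hux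
  exact (hU β).isClosed_compl.mem_of_tendsto hux' (Eventually.of_forall fun n => huU n)

theorem banach_of_long_colimit_general {𝕜 : Type*} [RCLike 𝕜]
    {E : Type*} [NormedAddCommGroup E] [NormedSpace 𝕜 E]
    {ι : Type*} [Preorder ι]
    (hlong : ∀ C : Set ι, C.Countable → ∃ ub, ∀ i ∈ C, i ≤ ub)
    (s : ι → Submodule 𝕜 E) (hs : Monotone s) (hsU : ∀ x : E, ∃ α, x ∈ s α)
    (hcomplete : ∀ α, IsComplete ((s α : Set E))) :
    CompleteSpace E ∧
      (⨆ α, TopologicalSpace.coinduced (Subtype.val : s α → E)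
          (inferInstance : TopologicalSpace (s α)))
        = (inferInstance : TopologicalSpace E) := by
  have hcount : ∀ C : Set E, C.Countable → ∃ α, C ⊆ s α := fun C hC =>
    hC.exists_subset_of_monotone hlong (SetLike.coe_mono.comp hs) hsU
  refine ⟨completeSpace_of_countable_subset_isComplete fun C hC => ?_,
    iSup_coinduced_subtype_val_eq_of_countable_subset (fun α => (s α : Set E)) hcount⟩
  obtain ⟨α, hα⟩ := hcount C hC
  exact ⟨s α, hcomplete α, hα⟩

/-- Let `𝕜` be `ℝ` or `ℂ`, `(ι, ≤)` a long directed preorder, `E` a normed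
`𝕜`-vector space, and `{E_α}` a monotone family of linear subspaces with union `E` such that
each `E_α` is complete in the restriction of the norm of `E` (so all bonding inclusions are
isometric embeddings). Then `E` is a Banach space, and the norm topology on `E` coincides with
the colimit space topology, i.e. the finest topology making each inclusion `E_α → E`
continuous (the supremum of the topologies coinduced from the subspace topologies). -/
theorem banach_of_long_colimit {𝕜 : Type*} [RCLike 𝕜]
    {E : Type*} [NormedAddCommGroup E] [NormedSpace 𝕜 E]
    {ι : Type*} [Preorder ι] [IsDirected ι (· ≤ ·)]
    (hlong : ∀ C : Set ι, C.Countable → ∃ ub, ∀ i ∈ C, i ≤ ub)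
    (s : ι → Submodule 𝕜 E) (hs : Monotone s) (hsU : ∀ x : E, ∃ α, x ∈ s α)
    (hcomplete : ∀ α, IsComplete ((s α : Set E))) :
    CompleteSpace E ∧
      (⨆ α, TopologicalSpace.coinduced (Subtype.val : s α → E)
          (inferInstance : TopologicalSpace (s α)))
        = (inferInstance : TopologicalSpace E) :=
  banach_of_long_colimit_general hlong s hs hsU hcomplete
end

section
/- Let J be an uncountable set, 𝕂 = ℝ or ℂ, and 1 ≤ p < ∞. For each countable subset D ⊆ J, identify ℓ^p(D, 𝕂) with the closed subspace of ℓ^p(J, 𝕂) consisting of functions vanishing outside D. Then ℓ^p(J, 𝕂) = ⋃_{D ∈ [J]^{≤ω}} ℓ^p(D, 𝕂), and the norm topology on ℓ^p(J, 𝕂) coincides with the colimit space topology determined by the family {ℓ^p(D, 𝕂)}_{D ∈ [J]^{≤ω}}, i.e. the finest topology making each inclusion ℓ^p(D, 𝕂) → ℓ^p(J, 𝕂) continuous. -/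
open TopologicalSpace

/-! An `ℓ^p` function with `p < ∞` has countable support, since `‖f j‖ ^ p` is summable; hence any
countably many elements of `ℓ^p(J)`, together with a limit of them, lie in one subspace
`ℓ^p(D)` with `D` countable. As `ℓ^p(J)` is a metric space, hence sequential, a set whose traces
on all the `ℓ^p(D)` are closed is sequentially closed, hence closed. -/

theorem Memℓp.countable_setOf_ne_zero {α : Type*} {E : α → Type*}
    [∀ i, NormedAddCommGroup (E i)] {p : ENNReal} {f : ∀ i, E i} (hf : Memℓp f p)
    (hp : p ≠ ⊤) : {i | f i ≠ 0}.Countable := by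
  rcases eq_or_ne p 0 with rfl | hp₀
  · exact hf.finite_dsupport.countable
  have hsum := hf.summable (ENNReal.toReal_pos hp₀ hp)
  refine hsum.countable_support.mono fun i hi => ?_
  exact (Real.rpow_pos_of_pos (norm_pos_iff.mpr hi) _).ne'

theorem lp.exists_countable_forall_notMem_eq_zero {α : Type*} {E : α → Type*}
    [∀ i, NormedAddCommGroup (E i)] {p : ENNReal} (hp : p ≠ ⊤) {s : Set (lp E p)}
    (hs : s.Countable) : ∃ D : Set α, D.Countable ∧ ∀ f ∈ s, ∀ i ∉ D, f i = 0 := by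
  refine ⟨⋃ f ∈ s, {i | f i ≠ 0},
    hs.biUnion fun f _ => (lp.memℓp f).countable_setOf_ne_zero hp, fun f hf i hi => ?_⟩
  by_contra hfi
  exact hi (Set.mem_biUnion hf hfi)

theorem iSup₂_coinduced_subtype_val_eq_of_countable_subset {X ι : Type*} [t : TopologicalSpace X]
    [SequentialSpace X] {P : ι → Prop} {A : ι → Set X}
    (hA : ∀ s : Set X, s.Countable → ∃ i, P i ∧ s ⊆ A i) :
    ⨆ (i) (_ : P i), coinduced (Subtype.val : A i → X) inferInstance = t := by
  refine le_antisymm (iSup₂_le fun _ _ => continuous_iff_coinduced_le.mp continuous_subtype_val)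
    fun U hU => ?_
  simp only [isOpen_iSup_iff, isOpen_coinduced] at hU
  rw [← isClosed_compl_iff]
  refine IsSeqClosed.isClosed fun {x a} hxU hx => ?_
  obtain ⟨i, hi, hsub⟩ := hA (insert a (Set.range x)) ((Set.countable_range x).insert a)
  have hxA : ∀ n, x n ∈ A i := fun n => hsub (Set.mem_insert_of_mem _ ⟨n, rfl⟩)
  have hlim : Filter.Tendsto (fun n => (⟨x n, hxA n⟩ : A i)) Filter.atTop
      (nhds ⟨a, hsub (Set.mem_insert a _)⟩) :=
    tendsto_subtype_rng.mpr hx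
  exact (hU i hi).isClosed_compl.mem_of_tendsto hlim (Filter.Eventually.of_forall hxU)

theorem lp_colimit_of_uncountable_general {J : Type*} {𝕜 : Type*} [RCLike 𝕜]
    (p : ENNReal) [Fact (1 ≤ p)] (hp : p ≠ ⊤) :
    (∀ f : lp (fun _ : J => 𝕜) p, ∃ D : Set J, D.Countable ∧ ∀ j ∉ D, f j = 0) ∧
      (⨆ (D : Set J) (_ : D.Countable),
          TopologicalSpace.coinduced
            (Subtype.val : {f : lp (fun _ : J => 𝕜) p // ∀ j ∉ D, f j = 0}
                → lp (fun _ : J => 𝕜) p)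
            (inferInstance :
              TopologicalSpace {f : lp (fun _ : J => 𝕜) p // ∀ j ∉ D, f j = 0}))
        = (inferInstance : TopologicalSpace (lp (fun _ : J => 𝕜) p)) := by
  refine ⟨fun f => ?_, iSup₂_coinduced_subtype_val_eq_of_countable_subset fun s hs =>
    lp.exists_countable_forall_notMem_eq_zero hp hs⟩
  obtain ⟨D, hD, hfD⟩ :=
    lp.exists_countable_forall_notMem_eq_zero hp (Set.countable_singleton f)
  exact ⟨D, hD, hfD f rfl⟩

/-- Let `J` be an uncountable set, `𝕜 = ℝ` or `ℂ`, and `1 ≤ p < ∞`. Every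
element of `ℓ^p(J, 𝕜)` vanishes outside a countable set (so `ℓ^p(J, 𝕜)` is the union of the
subspaces `ℓ^p(D, 𝕜)` over countable `D ⊆ J`), and the norm topology on `ℓ^p(J, 𝕜)` coincides
with the colimit space topology determined by the family `{ℓ^p(D, 𝕜)}_{D countable}` (each
carrying the subspace topology), i.e. the finest topology making each inclusion
`ℓ^p(D, 𝕜) → ℓ^p(J, 𝕜)` continuous. -/
theorem lp_colimit_of_uncountable {J : Type*} [Uncountable J] {𝕜 : Type*} [RCLike 𝕜]
    (p : ENNReal) [Fact (1 ≤ p)] (hp : p ≠ ⊤) :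
    (∀ f : lp (fun _ : J => 𝕜) p, ∃ D : Set J, D.Countable ∧ ∀ j ∉ D, f j = 0) ∧
      (⨆ (D : Set J) (_ : D.Countable),
          TopologicalSpace.coinduced
            (Subtype.val : {f : lp (fun _ : J => 𝕜) p // ∀ j ∉ D, f j = 0}
                → lp (fun _ : J => 𝕜) p)
            (inferInstance :
              TopologicalSpace {f : lp (fun _ : J => 𝕜) p // ∀ j ∉ D, f j = 0}))
        = (inferInstance : TopologicalSpace (lp (fun _ : J => 𝕜) p)) :=
  lp_colimit_of_uncountable_general p hp
end

section
/- Let X be a locally compact Hausdorff space that is not pseudocompact, i.e. there exists a continuous unbounded function X → ℝ. Then X contains a subset A that is regular closed (A equals the closure in X of its interior), σ-compact, and not pseudocompact (some continuous real-valued function on A is unbounded). -/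
/-!
Pick points `xₙ` with `|f xₙ| > n` and relatively compact open neighbourhoods `Uₙ ⊆ {n < |f|}`
of them. Since `|f|` is locally bounded, the family `(Uₙ)` is locally finite, so
`A = ⋃ₙ closure Uₙ` is closed and equals the closure of the open set `⋃ₙ Uₙ ⊆ interior A`; it is
a countable union of compact sets, and `f` is unbounded on it because it contains every `xₙ`.
-/

open Set

section

variable {X : Type*} [TopologicalSpace X]

theorem LocallyFinite.closure_interior_iUnion_closure {ι : Type*} {U : ι → Set X}
    (hU : LocallyFinite U) (hUo : ∀ i, IsOpen (U i)) :
    closure (interior (⋃ i, closure (U i))) = ⋃ i, closure (U i) := by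
  rw [← hU.closure_iUnion]
  refine (closure_minimal interior_subset isClosed_closure).antisymm (closure_mono ?_)
  exact interior_maximal subset_closure (isOpen_iUnion hUo)

theorem locallyFinite_of_subset_lt {g : X → ℝ} (hg : Continuous g) {U : ℕ → Set X}
    (hU : ∀ n, U n ⊆ {y | (n : ℝ) < g y}) : LocallyFinite U := by
  intro y
  refine ⟨{z | g z < g y + 1}, (isOpen_lt hg continuous_const).mem_nhds (by simp), ?_⟩
  refine (finite_Iio ⌈g y + 1⌉₊).subset ?_
  rintro n ⟨z, hzU, hz⟩
  exact Nat.lt_ceil.mpr ((hU n hzU).trans hz)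

theorem exists_isOpen_isCompact_closure_subset_lt_abs [LocallyCompactSpace X] [RegularSpace X]
    {f : X → ℝ} (hf : Continuous f) (hub : ∀ B : ℝ, ∃ x, B < |f x|) :
    ∃ U : ℕ → Set X, (∀ n, IsOpen (U n)) ∧ (∀ n, IsCompact (closure (U n))) ∧
      (∀ n, U n ⊆ {y | (n : ℝ) < |f y|}) ∧ ∀ n, (U n).Nonempty := by
  choose x hx using fun n : ℕ => hub n
  choose U hUo hxU hUsub hUc using fun n : ℕ =>
    exists_open_between_and_isCompact_closure isCompact_singleton
      (isOpen_lt continuous_const hf.abs) (singleton_subset_iff.2 (hx n))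
  exact ⟨U, hUo, hUc, fun n => subset_closure.trans (hUsub n),
    fun n => ⟨x n, singleton_subset_iff.1 (hxU n)⟩⟩

end

/-- Let `X` be a locally compact Hausdorff space that is not pseudocompact,
i.e. there exists a continuous unbounded function `X → ℝ`. Then `X` contains a subset `A`
that is regular closed (`A` equals the closure of its interior), σ-compact, and not
pseudocompact (some continuous real-valued function on `A` is unbounded). -/
theorem exists_regularClosed_sigmaCompact_not_pseudocompact
    {X : Type*} [TopologicalSpace X] [T2Space X] [LocallyCompactSpace X]
    (hX : ∃ f : X → ℝ, Continuous f ∧ ¬∃ B : ℝ, ∀ x, |f x| ≤ B) :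
    ∃ A : Set X, closure (interior A) = A ∧
      (∃ K : ℕ → Set X, (∀ n, IsCompact (K n)) ∧ A = ⋃ n, K n) ∧
      ∃ g : A → ℝ, Continuous g ∧ ¬∃ B : ℝ, ∀ a : A, |g a| ≤ B := by
  obtain ⟨f, hf, hub⟩ := hX
  push Not at hub
  obtain ⟨U, hUo, hUc, hUf, hUne⟩ := exists_isOpen_isCompact_closure_subset_lt_abs hf hub
  have hlf : LocallyFinite U := locallyFinite_of_subset_lt hf.abs hUf
  refine ⟨⋃ n, closure (U n), hlf.closure_interior_iUnion_closure hUo, ⟨_, hUc, rfl⟩,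
    fun a => f a, hf.comp continuous_subtype_val, ?_⟩
  rintro ⟨B, hB⟩
  obtain ⟨y, hy⟩ := hUne ⌈B⌉₊
  exact (hB ⟨y, mem_iUnion.2 ⟨_, subset_closure hy⟩⟩).not_gt
    ((Nat.le_ceil B).trans_lt (hUf _ hy))
end

section
/- Let X be a metrizable, locally Euclidean space (every point has an open neighborhood homeomorphic to ℝⁿ for some n) with no isolated points. Then for every non-empty open subset U ⊆ X whose closure is compact, the group Homeo_{cl U}(X) of homeomorphisms of X fixing every point outside cl U, equipped with the compact-open topology, is not locally compact. -/
open TopologicalSpace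

variable (X : Type*) [TopologicalSpace X]

/-- The group of self-homeomorphisms of `X`, with `(f * g) x = f (g x)`. -/
instance : Group (Homeomorph X X) where
  mul f g := g.trans f
  one := Homeomorph.refl X
  inv := Homeomorph.symm
  mul_assoc f g h := Homeomorph.ext fun x => rfl
  one_mul f := Homeomorph.ext fun x => rfl
  mul_one f := Homeomorph.ext fun x => rfl
  inv_mul_cancel f := Homeomorph.ext fun x => f.symm_apply_apply x

@[simp] theorem homeoMul_apply (f g : Homeomorph X X) (x : X) : (f * g) x = f (g x) := rfl
@[simp] theorem homeoOne_apply (x : X) : (1 : Homeomorph X X) x = x := rfl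
@[simp] theorem homeoInv_apply (f : Homeomorph X X) (x : X) : f⁻¹ x = f.symm x := rfl

/-- The compact-open topology on the homeomorphism group of `X`, induced from the
compact-open topology on `C(X, X)`. -/
instance : TopologicalSpace (Homeomorph X X) :=
  TopologicalSpace.induced (fun h => (h : C(X, X))) ContinuousMap.compactOpen

/-- The subgroup `Homeo_K(X)` of homeomorphisms fixing every point outside `K`, with the
compact-open topology. -/
def HomeoK (K : Set X) : Subgroup (Homeomorph X X) where
  carrier := {h | ∀ x ∉ K, h x = x}
  one_mem' := fun x _ => rfl
  mul_mem' := by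
    intro a b ha hb x hx
    show a (b x) = x
    rw [hb x hx, ha x hx]
  inv_mem' := by
    intro a ha x hx
    show a.symm x = x
    conv_lhs => rw [← ha x hx]
    exact a.symm_apply_apply x

/-- The group of compactly supported homeomorphisms of `X`: those whose support
`closure {x | h x ≠ x}` is compact. -/
def HomeoCpt : Subgroup (Homeomorph X X) where
  carrier := {h | IsCompact (closure {x | h x ≠ x})}
  one_mem' := by
    show IsCompact (closure {x : X | (1 : Homeomorph X X) x ≠ x})
    have : {x : X | (1 : Homeomorph X X) x ≠ x} = ∅ := by ext x; simp
    rw [this, closure_empty]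
    exact isCompact_empty
  mul_mem' := by
    intro a b ha hb
    refine (ha.union hb).of_isClosed_subset isClosed_closure ?_
    rw [← closure_union]
    refine closure_mono fun x hx => ?_
    by_contra hc
    simp only [Set.mem_union, Set.mem_setOf_eq, not_or, not_not] at hc
    exact hx (by show a (b x) = x; rw [hc.2, hc.1])
  inv_mem' := by
    intro a ha
    have : {x | a⁻¹ x ≠ x} = {x | a x ≠ x} := by
      ext x
      simp only [Set.mem_setOf_eq, homeoInv_apply, ne_eq, not_iff_not]
      constructor
      · intro h
        exact ((congrArg (⇑a) h).symm.trans (a.apply_symm_apply x)).symm.symm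
      · intro h
        exact ((congrArg (⇑a.symm) h).symm.trans (a.symm_apply_apply x))
    show IsCompact (closure {x | a⁻¹ x ≠ x})
    rw [this]
    exact ha

theorem homeoK_le_homeoCpt [T2Space X] (K : Set X) (hK : IsCompact K) :
    HomeoK X K ≤ HomeoCpt X := by
  intro h hh
  show IsCompact (closure {x | h x ≠ x})
  refine hK.of_isClosed_subset isClosed_closure ?_
  have h1 : {x | h x ≠ x} ⊆ K := fun x hx => by
    by_contra hc
    exact hx (hh x hc)
  calc closure {x | h x ≠ x} ⊆ closure K := closure_mono h1
    _ = K := hK.isClosed.closure_eq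

/-- The colimit space topology on the group of compactly supported homeomorphisms: the finest
topology making each inclusion `Homeo_K(X) → ⋃_K Homeo_K(X)` continuous. -/
def homeoColimTop [T2Space X] : TopologicalSpace (HomeoCpt X) :=
  ⨆ (K : Set X) (hK : IsCompact K),
    TopologicalSpace.coinduced (Subgroup.inclusion (homeoK_le_homeoCpt X K hK))
      inferInstance


/-!
If `Homeo_{cl U}(X)` were locally compact, the identity would have a compact neighbourhood `C`,
and `C` would contain every element of the group moving each point by less than some `ε`.
In a Euclidean chart around a point of `U`, the map `y ↦ y + φ y • u`, with `φ` a `1/2`-Lipschitz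
bump supported in a small ball, is a homeomorphism pushing a segment towards its endpoint.
Extended by the identity it gives `g` all of whose powers move points by less than `ε`, so they
lie in `C`. The orbit of the initial point `a` of the segment converges, hence a cluster point
`h ∈ C` of `(g ^ k)` sends both `a` and `g a ≠ a` to the limit, contradicting injectivity of `h`.
-/

open Set Filter Function Metric Topology

section

variable {X}

theorem homeoPow_eq_iterate (f : X ≃ₜ X) (k : ℕ) : ⇑(f ^ k) = (⇑f)^[k] := by
  induction k with
  | zero => rfl
  | succ k ih => ext x; rw [pow_succ, homeoMul_apply, ih, iterate_succ_apply]

theorem homeoK_mono {K L : Set X} (hKL : K ⊆ L) : HomeoK X K ≤ HomeoK X L :=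
  fun _ hh x hx => hh x fun hxK => hx (hKL hxK)

theorem mapsTo_of_mem_homeoK {K : Set X} {h : X ≃ₜ X} (hh : h ∈ HomeoK X K) : MapsTo h K K := by
  intro x hx
  by_contra hhx
  have hfix : h (h x) = h x := hh _ hhx
  exact hhx (by rwa [h.injective hfix])

theorem dist_apply_le_diam_of_mem_homeoK {M : Type*} [PseudoMetricSpace M] {K : Set M}
    (hK : Bornology.IsBounded K) {h : M ≃ₜ M} (hh : h ∈ HomeoK M K) (x : M) :
    dist (h x) x ≤ diam K := by
  by_cases hx : x ∈ K
  · exact dist_le_diam_of_mem hK (mapsTo_of_mem_homeoK hh hx) hx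
  · rw [hh x hx, dist_self]
    exact diam_nonneg

theorem continuous_homeomorph_apply (x : X) : Continuous fun h : X ≃ₜ X => h x :=
  (continuous_eval_const x : Continuous fun f : C(X, X) => f x).comp
    (continuous_induced_dom (f := fun h : X ≃ₜ X => (h : C(X, X))))

theorem exists_forall_dist_lt_mem_of_mem_nhds_one {M : Type*} [PseudoMetricSpace M]
    {N : Set (M ≃ₜ M)} (hN : N ∈ 𝓝 1) :
    ∃ ε > 0, ∀ h : M ≃ₜ M, (∀ x, dist (h x) x < ε) → h ∈ N := by
  rw [nhds_induced, mem_comap] at hN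
  obtain ⟨N', hN', hN'N⟩ := hN
  obtain ⟨V, hV, hVN'⟩ := UniformSpace.mem_nhds_iff.mp hN'
  obtain ⟨K, W, -, hW, hKW⟩ := (ContinuousMap.mem_compactConvergence_entourage_iff _).mp hV
  obtain ⟨ε, hε, hεW⟩ := mem_uniformity_dist.mp hW
  refine ⟨ε, hε, fun h hh => hN'N (hVN' (hKW fun x _ => hεW ?_))⟩
  simpa [dist_comm] using hh x

theorem apply_eq_self_of_tendsto_pow_of_isCompact [T2Space X] {C : Set (X ≃ₜ X)}
    (hC : IsCompact C) {g : X ≃ₜ X} (hgC : ∀ k : ℕ, g ^ k ∈ C) {a q : X}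
    (ha : Tendsto (fun k : ℕ => (g ^ k) a) atTop (𝓝 q)) : g a = a := by
  obtain ⟨h, -, hh⟩ := hC.exists_clusterPt (f := map (g ^ ·) atTop)
    (tendsto_principal.mpr (Eventually.of_forall hgC))
  have hlim : ∀ b, Tendsto (fun k : ℕ => (g ^ k) b) atTop (𝓝 q) → h b = q := fun b hb =>
    eq_of_nhds_neBot (hh.map (continuous_homeomorph_apply b).continuousAt
      (tendsto_map'_iff.mpr hb))
  have hga : Tendsto (fun k : ℕ => (g ^ k) (g a)) atTop (𝓝 q) := by
    simpa only [pow_succ, homeoMul_apply] using (tendsto_add_atTop_iff_nat 1).mpr ha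
  exact h.injective ((hlim _ hga).trans (hlim _ ha).symm)

end

theorem lipschitzWith_tent {E : Type*} [SeminormedAddCommGroup E] (c : E) (r : ℝ) :
    LipschitzWith (1 / 2) fun y => max (r - ‖y - c‖) 0 / 2 := by
  refine LipschitzWith.of_dist_le_mul fun x y => ?_
  have hmax := abs_max_sub_max_le_abs (r - ‖x - c‖) (r - ‖y - c‖) 0
  have hnorm := abs_norm_sub_norm_le (x - c) (y - c)
  rw [sub_sub_sub_cancel_left, abs_sub_comm ‖y - c‖] at hmax
  rw [sub_sub_sub_cancel_right] at hnorm
  rw [Real.dist_eq, dist_eq_norm, ← sub_div, abs_div, abs_two]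
  push_cast
  linarith

section

variable {E : Type*} [NormedAddCommGroup E] [NormedSpace ℝ E] [CompleteSpace E]

theorem exists_homeomorph_of_lipschitzWith_sub_id {f : E → E} {K : NNReal}
    (hK : K < 1) (hf : LipschitzWith K (f - id)) : ∃ g : E ≃ₜ E, ⇑g = f := by
  have hf' : ApproximatesLinearOn f ((ContinuousLinearEquiv.refl ℝ E : E ≃L[ℝ] E) : E →L[ℝ] E)
      univ K := hf.lipschitzOnWith.approximatesLinearOn
  refine ⟨hf'.toHomeomorph f ?_, rfl⟩
  rcases subsingleton_or_nontrivial E with hE | hE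
  · exact .inl hE
  · right
    simpa using hK

theorem exists_homeomorph_orbit_tendsto [Nontrivial E] (c : E) {r : ℝ}
    (hr : 0 < r) : ∃ g : E ≃ₜ E, (∀ y ∉ closedBall c r, g y = y) ∧ g c ≠ c ∧
      ∃ q, Tendsto (fun k : ℕ => g^[k] c) atTop (𝓝 q) := by
  obtain ⟨u, hu⟩ := exists_norm_eq E zero_le_one
  set φ : E → ℝ := fun y => max (r - ‖y - c‖) 0 / 2
  have hφ : LipschitzWith (1 / 2) φ := lipschitzWith_tent c r
  obtain ⟨g, hg⟩ := exists_homeomorph_of_lipschitzWith_sub_id (f := fun y => y + φ y • u)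
    (K := 1 / 2) (by norm_num) <| LipschitzWith.of_dist_le_mul fun x y => by
      simp only [Pi.sub_apply, id, add_sub_cancel_left, dist_eq_norm, ← sub_smul, norm_smul,
        hu, mul_one]
      simpa only [dist_eq_norm] using hφ.dist_le_mul x y
  replace hg : ∀ y, g y = y + φ y • u := congrFun hg
  have hseg : ∀ s ∈ Icc 0 r, g (c + s • u) = c + ((s + r) / 2) • u := by
    intro s hs
    have hφs : φ (c + s • u) = (r - s) / 2 := by
      simp only [φ, add_sub_cancel_left, norm_smul, hu, Real.norm_of_nonneg hs.1, mul_one]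
      rw [max_eq_left (by linarith [hs.2])]
    rw [hg, hφs, add_assoc, ← add_smul]
    ring_nf
  have horbit : ∀ k : ℕ, g^[k] c = c + (r - r * (1 / 2) ^ k) • u := by
    intro k
    induction k with
    | zero => simp
    | succ k ih =>
      have hpos : 0 < (1 / 2 : ℝ) ^ k := by positivity
      have hle : (1 / 2 : ℝ) ^ k ≤ 1 := pow_le_one₀ (by norm_num) (by norm_num)
      have hk : r - r * (1 / 2) ^ k ∈ Icc 0 r := ⟨by nlinarith, by nlinarith⟩
      rw [iterate_succ_apply', ih, hseg _ hk]
      ring_nf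
  refine ⟨g, fun y hy => ?_, fun hgc => ?_, c + r • u, ?_⟩
  · have : φ y = 0 := by
      rw [mem_closedBall, dist_eq_norm, not_le] at hy
      simp only [φ, max_eq_right (sub_nonpos.mpr hy.le), zero_div]
    rw [hg, this, zero_smul, add_zero]
  · have hgc' := hseg 0 ⟨le_rfl, hr.le⟩
    rw [zero_smul, add_zero, hgc, left_eq_add, smul_eq_zero] at hgc'
    rcases hgc' with hr0 | hu0
    · linarith
    · simp [hu0] at hu
  · have hlim : Tendsto (fun k : ℕ => r - r * (1 / 2) ^ k) atTop (𝓝 r) := by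
      simpa using tendsto_const_nhds.sub
        ((tendsto_pow_atTop_nhds_zero_of_lt_one (r := (1 / 2 : ℝ)) (by norm_num)
          (by norm_num)).const_mul r)
    simpa only [horbit] using tendsto_const_nhds.add (hlim.smul_const u)

end

namespace Function.Injective

variable {α β : Type*} {j : α → β}

theorem extend_comp_leftInverse (hj : Injective j) {k k' : α → α} (hkk' : LeftInverse k' k) :
    LeftInverse (extend j (j ∘ k') id) (extend j (j ∘ k) id) := by
  intro x
  by_cases hx : ∃ y, j y = x
  · obtain ⟨y, rfl⟩ := hx
    simp only [hj.extend_apply, comp_apply, hkk' y]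
  · simp only [extend_apply' _ _ _ hx, id]

theorem extend_comp_apply_of_notMem_image (hj : Injective j) {B : Set α} {k : α → α}
    (hkB : ∀ y ∉ B, k y = y) {x : β} (hx : x ∉ j '' B) : extend j (j ∘ k) id x = x := by
  by_cases hxj : ∃ y, j y = x
  · obtain ⟨y, rfl⟩ := hxj
    rw [hj.extend_apply, comp_apply, hkB y fun hy => hx ⟨y, hy, rfl⟩]
  · exact extend_apply' _ _ _ hxj

end Function.Injective

section

variable {X} {E : Type*} [TopologicalSpace E] {j : E → X}

theorem Topology.IsOpenEmbedding.continuous_extend_comp (hj : IsOpenEmbedding j) {B : Set E}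
    (hB : IsClosed (j '' B)) {k : E → E} (hk : Continuous k) (hkB : ∀ y ∉ B, k y = y) :
    Continuous (extend j (j ∘ k) id) := by
  refine continuous_iff_continuousAt.mpr fun x => ?_
  by_cases hx : x ∈ j '' B
  · obtain ⟨y, -, rfl⟩ := hx
    rw [← hj.continuousAt_iff, extend_comp hj.injective]
    exact (hj.continuous.comp hk).continuousAt
  · exact continuousAt_id.congr
      (eventuallyEq_of_mem (hB.isOpen_compl.mem_nhds hx) fun x hx =>
        (hj.injective.extend_comp_apply_of_notMem_image hkB hx).symm)

theorem Topology.IsOpenEmbedding.exists_homeomorph_extend (hj : IsOpenEmbedding j) {B : Set E}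
    (hB : IsClosed (j '' B)) (g₀ : E ≃ₜ E) (hg₀ : ∀ y ∉ B, g₀ y = y) :
    ∃ g ∈ HomeoK X (j '' B), Semiconj j g₀ g := by
  have hg₀' : ∀ y ∉ B, g₀.symm y = y := fun y hy => g₀.symm_apply_eq.mpr (hg₀ y hy).symm
  refine ⟨⟨⟨extend j (j ∘ g₀) id, extend j (j ∘ g₀.symm) id,
      hj.injective.extend_comp_leftInverse g₀.symm_apply_apply,
      hj.injective.extend_comp_leftInverse g₀.apply_symm_apply⟩,
    hj.continuous_extend_comp hB g₀.continuous hg₀,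
    hj.continuous_extend_comp hB g₀.symm.continuous hg₀'⟩,
    fun _ hx => hj.injective.extend_comp_apply_of_notMem_image hg₀ hx,
    fun y => (hj.injective.extend_apply (j ∘ g₀) id y).symm⟩

end

theorem exists_mem_homeoK_orbit_tendsto {X : Type*} [TopologicalSpace X] [T2Space X]
    {E : Type*} [NormedAddCommGroup E] [NormedSpace ℝ E] [ProperSpace E] [Nontrivial E]
    {j : E → X} (hj : IsOpenEmbedding j) {W : Set X} (hW : IsOpen W) {c : E} (hc : j c ∈ W) :
    ∃ g ∈ HomeoK X W, ∃ a q, g a ≠ a ∧ Tendsto (fun k : ℕ => (g ^ k) a) atTop (𝓝 q) := by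
  obtain ⟨r, hr, hrW⟩ :=
    nhds_basis_closedBall.mem_iff.mp ((hW.preimage hj.continuous).mem_nhds hc)
  obtain ⟨g₀, hg₀B, hg₀c, q, hq⟩ := exists_homeomorph_orbit_tendsto c hr
  obtain ⟨g, hgB, hgj⟩ := hj.exists_homeomorph_extend
    ((isCompact_closedBall c r).image hj.continuous).isClosed g₀ hg₀B
  refine ⟨g, homeoK_mono (image_subset_iff.mpr hrW) hgB, j c, j q, ?_, ?_⟩
  · rw [← hgj c]
    exact hj.injective.ne hg₀c
  · simp_rw [homeoPow_eq_iterate, ← hgj.iterate_right _ c]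
    exact (hj.continuous.tendsto q).comp hq

theorem IsOpen.nontrivial_of_mem {X : Type*} [TopologicalSpace X] {V : Set X} (hV : IsOpen V)
    {p : X} (hp : p ∈ V) [(𝓝[≠] p).NeBot] : V.Nontrivial := by
  by_contra hV1
  rw [not_nontrivial_iff] at hV1
  exact not_isOpen_singleton p (hV1.eq_singleton_of_mem hp ▸ hV)

/-- Let `X` be a metrizable, locally Euclidean space (every point has an
open neighborhood homeomorphic to some `ℝⁿ`) with no isolated points. Then for every
non-empty open `U ⊆ X` with compact closure, the group `Homeo_{cl U}(X)` of homeomorphisms of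
`X` fixing every point outside `cl U`, with the compact-open topology, is not locally
compact. -/
theorem homeoClosure_not_locallyCompact [MetrizableSpace X]
    (heucl : ∀ x : X, ∃ (n : ℕ) (U : Set X), IsOpen U ∧ x ∈ U ∧
      Nonempty (U ≃ₜ (Fin n → ℝ)))
    (hni : ∀ x : X, (nhdsWithin x {x}ᶜ).NeBot) :
    ∀ U : Set X, IsOpen U → U.Nonempty → IsCompact (closure U) →
      ¬LocallyCompactSpace (HomeoK X (closure U)) := by
  intro U hU ⟨p, hpU⟩ _ _
  let := metrizableSpaceMetric X
  obtain ⟨C, hC, hC1⟩ := exists_compact_mem_nhds (1 : HomeoK X (closure U))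
  obtain ⟨N, hN, hNC⟩ := (mem_nhds_subtype _ _ _).mp hC1
  obtain ⟨ε, hε, hεN⟩ := exists_forall_dist_lt_mem_of_mem_nhds_one hN
  obtain ⟨n, V, hV, hpV, ⟨e⟩⟩ := heucl p
  have := hni p
  have := (hV.nontrivial_of_mem hpV).coe_sort
  have : Nontrivial (Fin n → ℝ) := e.toEquiv.symm.nontrivial
  set W := U ∩ ball p (ε / 4)
  obtain ⟨g, hgW, a, q, hga, hq⟩ := exists_mem_homeoK_orbit_tendsto
    (hV.isOpenEmbedding_subtypeVal.comp e.symm.isOpenEmbedding) (hU.inter isOpen_ball : IsOpen W)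
    (c := e ⟨p, hpV⟩) (by simp [hpU, hε])
  have hWb : Bornology.IsBounded W := isBounded_ball.subset inter_subset_right
  have hWε : diam W < ε :=
    calc diam W ≤ diam (ball p (ε / 4)) := diam_mono inter_subset_right isBounded_ball
      _ ≤ 2 * (ε / 4) := diam_ball (by positivity)
      _ < ε := by linarith
  have hgC (k : ℕ) : g ^ k ∈ Subtype.val '' C :=
    ⟨⟨g ^ k, pow_mem (homeoK_mono (inter_subset_left.trans subset_closure) hgW) k⟩,
      hNC (hεN _ fun x => (dist_apply_le_diam_of_mem_homeoK hWb (pow_mem hgW k) x).trans_lt hWε),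
      rfl⟩
  exact hga (apply_eq_self_of_tendsto_pow_of_isCompact (hC.image continuous_subtype_val) hgC hq)
end
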